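/- Let D be a symmetric monoidal closed category with countable coproducts and E a class of epimorphisms of D containing all isomorphisms and closed under composition, such that D is stable with respect to E, E is closed under wide pushouts and tensor products, and D has wide pushouts of families of E-morphisms. Fix objects X and Y of D and let X⁎ be the free monoid object on X. Then every language L : X⁎ → Y has a syntactic D-monoid: there exist a monoid object Syn L, a monoid morphism e_L : X⁎ → Syn L whose underlying morphism lies in E, and a morphism f_L : Syn L → Y with L = f_L ∘ e_L, such that for every monoid morphism e : X⁎ → M with underlying morphism in E and every morphism f : M → Y with L = f ∘ e, there exists a monoid morphism h : M → Syn L with h ∘ e = e_L. -/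

import Mathlib

open CategoryTheory CategoryTheory.Limits CategoryTheory.MonoidalCategory

universe w v u

/-- A cocone `(g i : B i ⟶ P, g₀ : A ⟶ P)` is a wide pushout of the family
`f i : A ⟶ B i` if it commutes and satisfies the universal property of the colimit
of the wide span. -/
def IsWidePushout {C : Type u} [Category.{v} C] {ι : Type w} {A : C} {B : ι → C} {P : C}
    (f : ∀ i, A ⟶ B i) (g : ∀ i, B i ⟶ P) (g₀ : A ⟶ P) : Prop :=
  (∀ i, f i ≫ g i = g₀) ∧
    ∀ ⦃Z : C⦄ (c₀ : A ⟶ Z) (c : ∀ i, B i ⟶ Z), (∀ i, f i ≫ c i = c₀) →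
      ∃! w : P ⟶ Z, g₀ ≫ w = c₀ ∧ ∀ i, g i ≫ w = c i

theorem isWidePushout_of_adj {C : Type*} {C' : Type*} [Category C] [Category C']
    {F : C ⥤ C'} {G : C' ⥤ C} (adj : F ⊣ G) {ι : Type*} {A : C} {B : ι → C} {P : C}
    {f : ∀ i, A ⟶ B i} {g : ∀ i, B i ⟶ P} {g₀ : A ⟶ P} (h : IsWidePushout f g g₀) :
    IsWidePushout (fun i => F.map (f i)) (fun i => F.map (g i)) (F.map g₀) := by
  constructor
  · intro i; rw [← F.map_comp, h.1 i]
  · intro Z c₀ c hc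
    obtain ⟨w, ⟨hw₀, hw⟩, huniq⟩ :=
      h.2 ((adj.homEquiv A Z) c₀) (fun i => (adj.homEquiv _ Z) (c i))
        (fun i => by rw [← hc i, Adjunction.homEquiv_naturality_left])
    refine ⟨(adj.homEquiv P Z).symm w, ⟨?_, fun i => ?_⟩, ?_⟩
    · rw [← Adjunction.homEquiv_naturality_left_symm, hw₀, Equiv.symm_apply_apply]
    · rw [← Adjunction.homEquiv_naturality_left_symm, hw i, Equiv.symm_apply_apply]
    · rintro w' ⟨hw₀', hw'⟩
      have hval : (adj.homEquiv P Z) w' = w := by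
        refine huniq _ ⟨?_, fun i => ?_⟩
        · rw [← Adjunction.homEquiv_naturality_left, hw₀']
        · rw [← Adjunction.homEquiv_naturality_left, hw' i]
      rw [← hval, Equiv.symm_apply_apply]

variable {D : Type u} [Category.{v} D] [MonoidalCategory D] [SymmetricCategory D]
  [MonoidalClosed D] [HasCountableCoproducts D]

theorem isWidePushout_whiskerLeft (C : D) {ι : Type*} {A : D} {B : ι → D} {P : D}
    {f : ∀ i, A ⟶ B i} {g : ∀ i, B i ⟶ P} {g₀ : A ⟶ P} (h : IsWidePushout f g g₀) :
    IsWidePushout (fun i => C ◁ f i) (fun i => C ◁ g i) (C ◁ g₀) :=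
  isWidePushout_of_adj (ihom.adjunction C) h

theorem isWidePushout_whiskerRight (C : D) {ι : Type*} {A : D} {B : ι → D} {P : D}
    {f : ∀ i, A ⟶ B i} {g : ∀ i, B i ⟶ P} {g₀ : A ⟶ P} (h : IsWidePushout f g g₀) :
    IsWidePushout (fun i => f i ▷ C) (fun i => g i ▷ C) (g₀ ▷ C) := by
  obtain ⟨-, huniv⟩ := isWidePushout_whiskerLeft C h
  constructor
  · intro i; rw [← comp_whiskerRight, h.1 i]
  · intro Z c₀ c hc
    obtain ⟨w, ⟨hw₀, hw⟩, huniq⟩ :=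
      huniv ((β_ C A).hom ≫ c₀) (fun i => (β_ C (B i)).hom ≫ c i) (fun i => by
        rw [← Category.assoc, BraidedCategory.braiding_naturality_right,
          Category.assoc, hc i])
    refine ⟨(β_ P C).hom ≫ w, ⟨?_, fun i => ?_⟩, ?_⟩
    · rw [← Category.assoc, BraidedCategory.braiding_naturality_left, Category.assoc, hw₀,
        ← Category.assoc, SymmetricCategory.symmetry, Category.id_comp]
    · rw [← Category.assoc, BraidedCategory.braiding_naturality_left, Category.assoc, hw i,
        ← Category.assoc, SymmetricCategory.symmetry, Category.id_comp]
    · rintro w' ⟨hw₀', hw'⟩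
      have hval : (β_ C P).hom ≫ w' = w := by
        refine huniq _ ⟨?_, fun i => ?_⟩
        · rw [← Category.assoc, BraidedCategory.braiding_naturality_right,
            Category.assoc, hw₀']
        · rw [← Category.assoc, BraidedCategory.braiding_naturality_right,
            Category.assoc, hw' i]
      rw [← hval, ← Category.assoc, SymmetricCategory.symmetry, Category.id_comp]

/-- `D` is stable with respect to a class `E` of morphisms if for all `a, b` in `E`
the square formed by `a ⊗ B`, `A ⊗ b`, `A' ⊗ b`, `a ⊗ B'` is a pushout. -/
def StableWrt (E : MorphismProperty D) : Prop :=
  ∀ {A A' B B' : D} (a : A ⟶ A') (b : B ⟶ B'), E a → E b →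
    IsPushout (a ▷ B) (A ◁ b) (A' ◁ b) (a ▷ B')

/-- Under the stated assumptions on `D` and the class `E`, every
language `L : X⁎ ⟶ Y` (where `X⁎` is the free monoid object on `X`) has a syntactic
`D`-monoid: a monoid object `Syn L` with an `E`-carried monoid morphism
`e_L : X⁎ ⟶ Syn L` and `f_L : Syn L ⟶ Y` with `L = f_L ∘ e_L`, such that every
`E`-carried monoid morphism recognizing `L` factorizes through `e_L`. -/
theorem syntactic_monoid_exists (E : MorphismProperty D)
    (hepi : ∀ {A B : D} (f : A ⟶ B), E f → Epi f)
    (hiso : ∀ {A B : D} (f : A ⟶ B), IsIso f → E f)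
    (hcomp : ∀ {A B C : D} (f : A ⟶ B) (g : B ⟶ C), E f → E g → E (f ≫ g))
    (hstable : StableWrt E)
    -- `E` is closed under tensor products
    (htensor : ∀ {A A' B B' : D} (a : A ⟶ A') (b : B ⟶ B'), E a → E b → E (a ⊗ₘ b))
    -- `E` is closed under wide pushouts
    (hwpclosed : ∀ {ι : Type (max u v)} {A : D} {B : ι → D} {P : D}
      (f : ∀ j, A ⟶ B j) (g : ∀ j, B j ⟶ P) (g₀ : A ⟶ P),
      (∀ j, E (f j)) → IsWidePushout f g g₀ → (∀ j, E (g j)) ∧ E g₀)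
    -- `D` has wide pushouts of families of `E`-morphisms
    (hwpex : ∀ {ι : Type (max u v)} {A : D} (B : ι → D) (f : ∀ j, A ⟶ B j),
      (∀ j, E (f j)) →
      ∃ (P : D) (g : ∀ j, B j ⟶ P) (g₀ : A ⟶ P), IsWidePushout f g g₀)
    -- `X⁎` is the free monoid object on `X`
    (X Y : D) (Xs : Mon D) (η : X ⟶ Xs.X)
    (hfree : ∀ (M : Mon D) (f : X ⟶ M.X), ∃! h : Xs ⟶ M, η ≫ h.hom = f)
    -- the language
    (L : Xs.X ⟶ Y) :
    ∃ (SynL : Mon D) (eL : Xs ⟶ SynL) (fL : SynL.X ⟶ Y),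
      E eL.hom ∧ L = eL.hom ≫ fL ∧
      ∀ (M : Mon D) (e : Xs ⟶ M) (f : M.X ⟶ Y),
        E e.hom → L = e.hom ≫ f → ∃ h : M ⟶ SynL, e ≫ h = eL := by
  classical
  -- the index type of all E-carried recognizers of L
  let ι : Type (max u v) :=
    {p : Σ M : Mon D, (Xs ⟶ M) × (M.X ⟶ Y) // E p.2.1.hom ∧ L = p.2.1.hom ≫ p.2.2}
  obtain ⟨P, g, g₀, hwp⟩ :=
    hwpex (ι := ι) (fun p => p.1.1.X) (fun p => p.1.2.1.hom) (fun p => p.2.1)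
  obtain ⟨hgE, hg₀E⟩ := hwpclosed _ _ _ (fun p => p.2.1) hwp
  have hgcomm : ∀ p : ι, p.1.2.1.hom ≫ g p = g₀ := hwp.1
  have hidE : ∀ (A : D), E (𝟙 A) := fun A => hiso _ inferInstance
  have hwhiskLE : ∀ {A B : D} (C : D) (a : A ⟶ B), E a → E (C ◁ a) := by
    intro A B C a ha; rw [← id_tensorHom]; exact htensor _ _ (hidE C) ha
  have hwhiskRE : ∀ {A B : D} (C : D) (a : A ⟶ B), E a → E (a ▷ C) := by
    intro A B C a ha; rw [← tensorHom_id]; exact htensor _ _ ha (hidE C)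
  -- Stage A : multiplication of P by Xs on the right
  have hccA : ∀ p : ι, (p.1.2.1.hom ▷ Xs.X) ≫
      (p.1.1.X ◁ p.1.2.1.hom) ≫ MonObj.mul (X := p.1.1.X) ≫ g p = MonObj.mul (X := Xs.X) ≫ g₀ := by
    intro p
    rw [← Category.assoc, ← MonoidalCategory.tensorHom_def, ← IsMonHom.mul_hom_assoc, hgcomm p]
  obtain ⟨m₁, ⟨hm₁₀, hm₁⟩, -⟩ :=
    (isWidePushout_whiskerRight Xs.X hwp).2 (MonObj.mul (X := Xs.X) ≫ g₀)
      (fun p => (p.1.1.X ◁ p.1.2.1.hom) ≫ MonObj.mul (X := p.1.1.X) ≫ g p) hccA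
  -- the auxiliary maps d p q : M_q ⊗ M_p ⟶ P, from stability
  have hd : ∀ p q : ι, ∃ d : q.1.1.X ⊗ p.1.1.X ⟶ P,
      (q.1.1.X ◁ p.1.2.1.hom) ≫ d = (q.1.1.X ◁ q.1.2.1.hom) ≫ MonObj.mul (X := q.1.1.X) ≫ g q ∧
      (q.1.2.1.hom ▷ p.1.1.X) ≫ d = (p.1.2.1.hom ▷ p.1.1.X) ≫ MonObj.mul (X := p.1.1.X) ≫ g p := by
    intro p q
    have hsq := hstable q.1.2.1.hom p.1.2.1.hom q.2.1 p.2.1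
    have hcomm : (q.1.2.1.hom ▷ Xs.X) ≫ (q.1.1.X ◁ q.1.2.1.hom) ≫ MonObj.mul (X := q.1.1.X) ≫ g q =
        (Xs.X ◁ p.1.2.1.hom) ≫ (p.1.2.1.hom ▷ p.1.1.X) ≫ MonObj.mul (X := p.1.1.X) ≫ g p := by
      rw [← Category.assoc, ← MonoidalCategory.tensorHom_def, ← IsMonHom.mul_hom_assoc, hgcomm q,
        ← Category.assoc, ← tensorHom_def', ← IsMonHom.mul_hom_assoc, hgcomm p]
    exact ⟨hsq.desc _ _ hcomm, hsq.inl_desc _ _ hcomm, hsq.inr_desc _ _ hcomm⟩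
  choose d hd₁ hd₂ using hd
  -- d p p = μ_p ≫ g p
  have hdpp : ∀ p : ι, d p p = MonObj.mul (X := p.1.1.X) ≫ g p := by
    intro p
    haveI : Epi (p.1.1.X ◁ p.1.2.1.hom) := hepi _ (hwhiskLE _ _ p.2.1)
    rw [← cancel_epi (p.1.1.X ◁ p.1.2.1.hom), hd₁ p p]
  -- Stage B inner : maps c p : P ⊗ M_p ⟶ P
  have hc : ∀ p : ι, ∃ cp : P ⊗ p.1.1.X ⟶ P,
      (g₀ ▷ p.1.1.X) ≫ cp = (p.1.2.1.hom ▷ p.1.1.X) ≫ MonObj.mul (X := p.1.1.X) ≫ g p ∧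
      ∀ q, (g q ▷ p.1.1.X) ≫ cp = d p q := by
    intro p
    obtain ⟨cp, ⟨h₀, h₁⟩, -⟩ :=
      (isWidePushout_whiskerRight p.1.1.X hwp).2
        ((p.1.2.1.hom ▷ p.1.1.X) ≫ MonObj.mul (X := p.1.1.X) ≫ g p) (fun q => d p q) (fun q => hd₂ p q)
    exact ⟨cp, h₀, h₁⟩
  choose c hc₀ hcg using hc
  -- compatibility of c p with m₁
  have hcm : ∀ p : ι, (P ◁ p.1.2.1.hom) ≫ c p = m₁ := by
    intro p
    haveI : Epi (g₀ ▷ Xs.X) := hepi _ (hwhiskRE _ _ hg₀E)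
    rw [← cancel_epi (g₀ ▷ Xs.X), ← Category.assoc, ← whisker_exchange, Category.assoc,
      hc₀ p, hm₁₀, ← Category.assoc, ← tensorHom_def', ← IsMonHom.mul_hom_assoc, hgcomm p]
  -- Stage B : the multiplication on P
  obtain ⟨μP, ⟨hμP₀, hμPg⟩, -⟩ := (isWidePushout_whiskerLeft P hwp).2 m₁ c hcm
  -- key equations
  have hK0 : (g₀ ⊗ₘ g₀) ≫ μP = MonObj.mul (X := Xs.X) ≫ g₀ := by
    rw [MonoidalCategory.tensorHom_def, Category.assoc, hμP₀, hm₁₀]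
  have hKp : ∀ p : ι, (g p ⊗ₘ g p) ≫ μP = MonObj.mul (X := p.1.1.X) ≫ g p := by
    intro p
    rw [MonoidalCategory.tensorHom_def, Category.assoc, hμPg p, hcg p p, hdpp p]
  -- the syntactic monoid
  haveI : Epi g₀ := hepi _ hg₀E
  have h1 : ((g₀ ⊗ₘ g₀) ⊗ₘ g₀) ≫ (μP ▷ P) = (MonObj.mul (X := Xs.X) ▷ Xs.X) ≫ (g₀ ⊗ₘ g₀) := by
    rw [← tensorHom_id μP, ← tensorHom_id (MonObj.mul (X := Xs.X)), tensorHom_comp_tensorHom, tensorHom_comp_tensorHom, hK0,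
      Category.comp_id, Category.id_comp]
  have h2 : (g₀ ⊗ₘ (g₀ ⊗ₘ g₀)) ≫ (P ◁ μP) = (Xs.X ◁ MonObj.mul (X := Xs.X)) ≫ (g₀ ⊗ₘ g₀) := by
    rw [← id_tensorHom P μP, ← id_tensorHom Xs.X (MonObj.mul (X := Xs.X)), tensorHom_comp_tensorHom, tensorHom_comp_tensorHom, hK0,
      Category.comp_id, Category.id_comp]
  let SynL : Mon D := {
    X := P
    mon := {
    one := MonObj.one (X := Xs.X) ≫ g₀
    mul := μP
    one_mul := by
      haveI : Epi ((𝟙_ D) ◁ g₀) := hepi _ (hwhiskLE _ _ hg₀E)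
      rw [← cancel_epi ((𝟙_ D) ◁ g₀), ← Category.assoc, whisker_exchange,
        Category.assoc, MonoidalCategory.comp_whiskerRight, Category.assoc,
        ← MonoidalCategory.tensorHom_def_assoc, hK0, MonObj.one_mul_assoc,
        MonoidalCategory.leftUnitor_naturality]
    mul_one := by
      haveI : Epi (g₀ ▷ (𝟙_ D)) := hepi _ (hwhiskRE _ _ hg₀E)
      rw [← cancel_epi (g₀ ▷ (𝟙_ D)), ← Category.assoc, ← whisker_exchange,
        Category.assoc, MonoidalCategory.whiskerLeft_comp, Category.assoc,
        ← tensorHom_def'_assoc, hK0, MonObj.mul_one_assoc,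
        MonoidalCategory.rightUnitor_naturality]
    mul_assoc := by
      haveI : Epi ((g₀ ⊗ₘ g₀) ⊗ₘ g₀) := hepi _ (htensor _ _ (htensor _ _ hg₀E hg₀E) hg₀E)
      rw [← cancel_epi ((g₀ ⊗ₘ g₀) ⊗ₘ g₀), ← Category.assoc, h1, Category.assoc, hK0,
        MonObj.mul_assoc_assoc,
        MonoidalCategory.associator_naturality_assoc g₀ g₀ g₀,
        ← Category.assoc (g₀ ⊗ₘ (g₀ ⊗ₘ g₀)), h2, Category.assoc, hK0] } }
  obtain ⟨fL, ⟨hfL₀, -⟩, -⟩ := hwp.2 L (fun p => p.1.2.2) (fun p => (p.2.2).symm)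
  refine ⟨SynL, Mon.Hom.mk' g₀ rfl hK0.symm, fL, hg₀E, hfL₀.symm, ?_⟩
  intro M e f hEe hLe
  let p : ι := ⟨⟨M, e, f⟩, hEe, hLe⟩
  refine ⟨Mon.Hom.mk' (g p) ?_ ?_, ?_⟩
  · show MonObj.one (X := M.X) ≫ g p = MonObj.one (X := Xs.X) ≫ g₀
    rw [← hgcomm p, IsMonHom.one_hom_assoc]
  · show MonObj.mul (X := M.X) ≫ g p = (g p ⊗ₘ g p) ≫ μP
    exact (hKp p).symm
  · apply Mon.Hom.ext
    simpa using hgcomm p
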